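/- Let $\chi_2 \in L^\infty(0,1)$ with $\chi_2(x) > 0$ for a.e. $x \in (0,1)$. If $\alpha \in \mathbb{C}$ satisfies both $\alpha^2 \int_0^1 \chi_2\,dx + 2\alpha \int_0^1 \chi_2 x\,dx + \int_0^1 \chi_2 x^2\,dx = 0$ and $\alpha^2 \int_0^1 \chi_2 x\,dx + 2\alpha \int_0^1 \chi_2 x^2\,dx + \int_0^1 \chi_2 x^3\,dx = 0$, then $\alpha$ is real. -/

import Mathlib

/-!
Subtracting `b` times the first equation from `a` times the second, where `a, b, c, d` are the
moments of order `0, …, 3` of `χ₂`, eliminates `α²` and leaves `2α (b² - ac) = ad - bc`. The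
coefficient `b² - ac` is real and negative by the strict Cauchy–Schwarz inequality for the
positive weight `χ₂`, so `α` is real.
-/

open MeasureTheory Set

lemma integral_pos_of_ae_pos {α : Type*} [MeasurableSpace α] {μ : Measure α} (hμ : μ ≠ 0)
    {f : α → ℝ} (hfi : Integrable f μ) (hf : ∀ᵐ x ∂μ, 0 < f x) : 0 < ∫ x, f x ∂μ := by
  rw [integral_pos_iff_support_of_nonneg_ae (hf.mono fun _ hx => hx.le) hfi]
  have hfull : Function.support f =ᵐ[μ] univ :=
    ae_eq_univ.mpr (ae_iff.mp (hf.mono fun _ hx => hx.ne'))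
  rw [measure_congr hfull]
  exact Measure.measure_univ_pos.mpr hμ

theorem sq_integral_mul_id_lt {μ : Measure ℝ} [NullSingletonClass μ] (hμ : μ ≠ 0) {w : ℝ → ℝ}
    (hw : ∀ᵐ x ∂μ, 0 < w x) (hw₀ : Integrable w μ) (hw₁ : Integrable (fun x => w x * x) μ)
    (hw₂ : Integrable (fun x => w x * x ^ 2) μ) :
    (∫ x, w x * x ∂μ) ^ 2 < (∫ x, w x ∂μ) * ∫ x, w x * x ^ 2 ∂μ := by
  set a := ∫ x, w x ∂μ
  set b := ∫ x, w x * x ∂μ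
  set c := ∫ x, w x * x ^ 2 ∂μ
  have hsplit (t : ℝ) : (fun x => w x * (x - t) ^ 2)
      = fun x => t ^ 2 * w x - 2 * t * (w x * x) + w x * x ^ 2 := by
    funext x; ring
  have hint (t : ℝ) : Integrable (fun x => w x * (x - t) ^ 2) μ := by
    rw [hsplit]
    exact ((hw₀.const_mul _).sub' (hw₁.const_mul _)).fun_add hw₂
  -- `∫ w (x - t)²` is a quadratic in `t` without real roots since `x ≠ t` a.e.
  have hquad (t : ℝ) : 0 < a * (t * t) + -2 * b * t + c := by
    have hpos : 0 < ∫ x, w x * (x - t) ^ 2 ∂μ := by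
      refine integral_pos_of_ae_pos hμ (hint t) ?_
      filter_upwards [hw, Measure.ae_ne μ t] with x hwx hxt
      exact mul_pos hwx (pow_two_pos_of_ne_zero (sub_ne_zero.mpr hxt))
    rw [hsplit, integral_add ((hw₀.const_mul _).sub' (hw₁.const_mul _)) hw₂,
      integral_sub (hw₀.const_mul _) (hw₁.const_mul _), integral_const_mul,
      integral_const_mul] at hpos
    linarith
  have ha : 0 < a := integral_pos_of_ae_pos hμ hw₀ hw
  have hdisc := discrim_lt_zero ha.ne' hquad
  rw [discrim] at hdisc
  nlinarith

theorem integrable_mul_pow_restrict_Ioo {w : ℝ → ℝ} (hw : Integrable w (volume.restrict (Ioo 0 1)))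
    (k : ℕ) : Integrable (fun x => w x * x ^ k) (volume.restrict (Ioo 0 1)) := by
  refine hw.mul_bdd (continuous_pow k).aestronglyMeasurable (c := 1) ?_
  filter_upwards [ae_restrict_mem measurableSet_Ioo] with x ⟨hx₀, hx₁⟩
  rw [norm_pow, Real.norm_eq_abs, abs_of_pos hx₀]
  exact pow_le_one₀ hx₀.le hx₁.le

theorem im_eq_zero_of_quadratic_pair {α : ℂ} {a b c d : ℝ} (hdet : b ^ 2 ≠ a * c)
    (h₁ : α ^ 2 * a + 2 * α * b + c = 0) (h₂ : α ^ 2 * b + 2 * α * c + d = 0) : α.im = 0 := by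
  have hlin : 2 * α * ((b ^ 2 - a * c : ℝ) : ℂ) = ((a * d - b * c : ℝ) : ℂ) := by
    push_cast
    linear_combination (b : ℂ) * h₁ - (a : ℂ) * h₂
  have him := congrArg Complex.im hlin
  rw [Complex.im_mul_ofReal, Complex.ofReal_im, mul_eq_zero] at him
  simpa [sub_ne_zero.mpr hdet] using him

/-- If `χ₂ ∈ L^∞(0,1)` is a.e. positive and `α ∈ ℂ` satisfies the
two quadratic equations with the moments of `χ₂`, then `α` is real. -/
theorem stmt_1 (χ₂ : ℝ → ℝ) (hmeas : Measurable χ₂)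
    (hbdd : ∃ M : ℝ, ∀ᵐ x ∂(volume.restrict (Ioo (0:ℝ) 1)), |χ₂ x| ≤ M)
    (hpos : ∀ᵐ x ∂(volume.restrict (Ioo (0:ℝ) 1)), 0 < χ₂ x)
    (α : ℂ)
    (h1 : α ^ 2 * ((∫ x in (0:ℝ)..1, χ₂ x : ℝ) : ℂ) +
          2 * α * ((∫ x in (0:ℝ)..1, χ₂ x * x : ℝ) : ℂ) +
          ((∫ x in (0:ℝ)..1, χ₂ x * x ^ 2 : ℝ) : ℂ) = 0)
    (h2 : α ^ 2 * ((∫ x in (0:ℝ)..1, χ₂ x * x : ℝ) : ℂ) +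
          2 * α * ((∫ x in (0:ℝ)..1, χ₂ x * x ^ 2 : ℝ) : ℂ) +
          ((∫ x in (0:ℝ)..1, χ₂ x * x ^ 3 : ℝ) : ℂ) = 0) :
    α.im = 0 := by
  obtain ⟨M, hM⟩ := hbdd
  have hint : Integrable χ₂ (volume.restrict (Ioo 0 1)) :=
    .of_bound hmeas.aestronglyMeasurable M (by simpa only [Real.norm_eq_abs] using hM)
  have hvol : volume.restrict (Ioo (0:ℝ) 1) ≠ 0 := by simp
  simp only [intervalIntegral.integral_of_le zero_le_one, integral_Ioc_eq_integral_Ioo] at h1 h2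
  refine im_eq_zero_of_quadratic_pair (sq_integral_mul_id_lt hvol hpos hint ?_ ?_).ne h1 h2
  · simpa only [pow_one] using integrable_mul_pow_restrict_Ioo hint 1
  · exact integrable_mul_pow_restrict_Ioo hint 2
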